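/- arXiv:2012.10208 — 3 statements merged into one kernel-verified Lean document; each statement's English description precedes it below -/
import Mathlib

section
/- For intervals [a₁,a₂] and [b₁,b₂] contained in [0,1] with a₁ ≤ a₂, b₁ ≤ b₂, and a₂−a₁+b₂−b₁ ≠ 0, the Xu–Da possibility degree satisfies P([a₁,a₂] ≥ [b₁,b₂]) + P([b₁,b₂] ≥ [a₁,a₂]) = 1. -/
noncomputable def xuDa (a1 a2 b1 b2 : ℝ) : ℝ :=
  max (1 - max ((b2 - a1) / (a2 - a1 + b2 - b1)) 0) 0

/- Writing `x = (b₂ - a₁) / d` and `y = (a₂ - b₁) / d` with `d = a₂ - a₁ + b₂ - b₁`, the two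
possibility degrees are `max (1 - max x 0) 0` and `max (1 - max y 0) 0`. As `x + y = 1`, these
are `y` and `x` clamped to `[0, 1]`, and the clamps of `y` and `1 - y` always add up to `1`. -/

lemma max_one_sub_max_zero_add_of_add_eq_one {x y : ℝ} (h : x + y = 1) :
    max (1 - max x 0) 0 + max (1 - max y 0) 0 = 1 := by
  simp only [max_def]
  split_ifs <;> linarith

lemma div_add_div_swap_eq_one {a1 a2 b1 b2 : ℝ} (hne : a2 - a1 + b2 - b1 ≠ 0) :
    (b2 - a1) / (a2 - a1 + b2 - b1) + (a2 - b1) / (b2 - b1 + a2 - a1) = 1 := by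
  rw [show b2 - b1 + a2 - a1 = a2 - a1 + b2 - b1 by ring, ← add_div, div_eq_one_iff_eq hne]
  ring

theorem stmt_5_general (a1 a2 b1 b2 : ℝ) (hne : a2 - a1 + b2 - b1 ≠ 0) :
    xuDa a1 a2 b1 b2 + xuDa b1 b2 a1 a2 = 1 :=
  max_one_sub_max_zero_add_of_add_eq_one (div_add_div_swap_eq_one hne)

theorem stmt_5 (a1 a2 b1 b2 : ℝ)
    (ha : a1 ∈ Set.Icc (0:ℝ) 1) (ha2 : a2 ∈ Set.Icc (0:ℝ) 1)
    (hb : b1 ∈ Set.Icc (0:ℝ) 1) (hb2 : b2 ∈ Set.Icc (0:ℝ) 1)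
    (h1 : a1 ≤ a2) (h2 : b1 ≤ b2) (hne : a2 - a1 + b2 - b1 ≠ 0) :
    xuDa a1 a2 b1 b2 + xuDa b1 b2 a1 a2 = 1 :=
  stmt_5_general a1 a2 b1 b2 hne
end

section
/- For intervals A=[a₁,a₂], B=[b₁,b₂] contained in [0,1] with a₁ ≤ a₂, b₁ ≤ b₂, and a₂−a₁+b₂−b₁ ≠ 0: the midpoint of A is strictly less than the midpoint of B if and only if P(A ≥ B) < 1/2. -/
theorem max_one_sub_max_zero_lt_iff {x t : ℝ} (ht₀ : 0 < t) (ht₁ : t ≤ 1) :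
    max (1 - max x 0) 0 < t ↔ 1 - t < x := by
  rw [max_lt_iff, and_iff_left ht₀, sub_lt_comm, lt_max_iff, or_iff_left (by linarith)]

theorem xuDa_lt_half_iff (a1 a2 b1 b2 : ℝ) :
    xuDa a1 a2 b1 b2 < 1 / 2 ↔ 1 / 2 < (b2 - a1) / (a2 - a1 + b2 - b1) := by
  rw [xuDa, max_one_sub_max_zero_lt_iff (by norm_num) (by norm_num)]
  norm_num

theorem midpoint_lt_iff_half_lt_div {a1 a2 b1 b2 : ℝ} (hL : 0 < a2 - a1 + b2 - b1) :
    (a1 + a2) / 2 < (b1 + b2) / 2 ↔ 1 / 2 < (b2 - a1) / (a2 - a1 + b2 - b1) := by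
  rw [lt_div_iff₀ hL]
  constructor <;> intro <;> linarith

theorem stmt_8_general (a1 a2 b1 b2 : ℝ)
    (h1 : a1 ≤ a2) (h2 : b1 ≤ b2) (hne : a2 - a1 + b2 - b1 ≠ 0) :
    (a1 + a2) / 2 < (b1 + b2) / 2 ↔ xuDa a1 a2 b1 b2 < 1 / 2 := by
  have hL : 0 < a2 - a1 + b2 - b1 := lt_of_le_of_ne (by linarith) hne.symm
  rw [midpoint_lt_iff_half_lt_div hL, xuDa_lt_half_iff]

theorem stmt_8 (a1 a2 b1 b2 : ℝ)
    (ha : a1 ∈ Set.Icc (0:ℝ) 1) (ha2 : a2 ∈ Set.Icc (0:ℝ) 1)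
    (hb : b1 ∈ Set.Icc (0:ℝ) 1) (hb2 : b2 ∈ Set.Icc (0:ℝ) 1)
    (h1 : a1 ≤ a2) (h2 : b1 ≤ b2) (hne : a2 - a1 + b2 - b1 ≠ 0) :
    (a1 + a2) / 2 < (b1 + b2) / 2 ↔ xuDa a1 a2 b1 b2 < 1 / 2 :=
  stmt_8_general a1 a2 b1 b2 h1 h2 hne
end

section
/- For intervals A=[a₁,a₂], B=[b₁,b₂] contained in [0,1] with a₁ ≤ a₂, b₁ ≤ b₂, and a₂−a₁+b₂−b₁ ≠ 0: the midpoint of A is strictly greater than the midpoint of B if and only if P(A ≥ B) > 1/2. -/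
lemma half_lt_max_one_sub_max_zero_iff (q : ℝ) :
    1 / 2 < max (1 - max q 0) 0 ↔ q < 1 / 2 := by
  rw [lt_max_iff, or_iff_left (by norm_num), lt_sub_comm, max_lt_iff,
    and_iff_left (by norm_num)]
  norm_num

lemma half_lt_xuDa_iff {a1 a2 b1 b2 : ℝ} (hS : 0 < a2 - a1 + b2 - b1) :
    1 / 2 < xuDa a1 a2 b1 b2 ↔ b1 + b2 < a1 + a2 := by
  rw [xuDa, half_lt_max_one_sub_max_zero_iff, div_lt_iff₀ hS]
  constructor <;> intro h <;> linarith

theorem stmt_9_general (a1 a2 b1 b2 : ℝ)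
    (h1 : a1 ≤ a2) (h2 : b1 ≤ b2) (hne : a2 - a1 + b2 - b1 ≠ 0) :
    (a1 + a2) / 2 > (b1 + b2) / 2 ↔ xuDa a1 a2 b1 b2 > 1 / 2 := by
  have hS : 0 < a2 - a1 + b2 - b1 := lt_of_le_of_ne (by linarith) hne.symm
  rw [gt_iff_lt, gt_iff_lt, half_lt_xuDa_iff hS, div_lt_div_iff_of_pos_right two_pos]

theorem stmt_9 (a1 a2 b1 b2 : ℝ)
    (ha : a1 ∈ Set.Icc (0:ℝ) 1) (ha2 : a2 ∈ Set.Icc (0:ℝ) 1)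
    (hb : b1 ∈ Set.Icc (0:ℝ) 1) (hb2 : b2 ∈ Set.Icc (0:ℝ) 1)
    (h1 : a1 ≤ a2) (h2 : b1 ≤ b2) (hne : a2 - a1 + b2 - b1 ≠ 0) :
    (a1 + a2) / 2 > (b1 + b2) / 2 ↔ xuDa a1 a2 b1 b2 > 1 / 2 :=
  stmt_9_general a1 a2 b1 b2 h1 h2 hne
end
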